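/- If p* and q* are two fixed points of H with 0 < p*_k < 1 and 0 < q*_k < 1 for every index k (i.e. H(p*) = p* and H(q*) = q* with p*, q* strictly between 0 and 1 entrywise), then p* = q*. In other words, the map H has at most one strictly positive fixed point. -/

import Mathlib

open Matrix BigOperators Finset

/-- Spectral abscissa of a real square matrix: the maximum of the real parts of its
(complex) eigenvalues. -/
noncomputable def specAbscissa {k : Type*} [Fintype k] [DecidableEq k]
    (M : Matrix k k ℝ) : ℝ :=
  sSup {r : ℝ | ∃ z ∈ spectrum ℂ (M.map Complex.ofReal), z.re = r}

/-- Diagonal `nm × nm` matrix (indexed by pairs `(α, i)`) built from rates `c^α_i`. -/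
noncomputable def pairDiag {n m : ℕ} (c : Fin m → Fin n → ℝ) :
    Matrix (Fin m × Fin n) (Fin m × Fin n) ℝ :=
  Matrix.diagonal fun q => c q.1 q.2

/-- The equilibrium dispersal Laplacian `L*`: block-diagonal, whose `α`-th `n × n` block
has `(i,i)` entry `ν^α_i = ∑_{j ≠ i} q^α_{ij}` and `(i,j)` entry `-q^α_{ji} π^α_j / π^α_i`
for `j ≠ i`. -/
noncomputable def Lstar {n m : ℕ} (Q : Fin m → Matrix (Fin n) (Fin n) ℝ)
    (piv : Fin m → Fin n → ℝ) : Matrix (Fin m × Fin n) (Fin m × Fin n) ℝ :=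
  Matrix.of fun q q' =>
    if q.1 = q'.1 then
      (if q.2 = q'.2 then ∑ j ∈ Finset.univ \ {q.2}, Q q.1 q.2 j
       else -(Q q.1 q'.2 q.2 * piv q.1 q'.2 / piv q.1 q.2))
    else 0

/-- The equilibrium population-fraction matrix `F*`: the `(α,σ)` block is the diagonal
matrix with entries `f^{*σ}_i = N^σ π^σ_i / ∑_τ N^τ π^τ_i` (the same row of blocks
repeated for every `α`). -/
noncomputable def Fstar {n m : ℕ} (N : Fin m → ℝ) (piv : Fin m → Fin n → ℝ) :
    Matrix (Fin m × Fin n) (Fin m × Fin n) ℝ :=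
  Matrix.of fun q q' =>
    if q.2 = q'.2 then N q'.1 * piv q'.1 q.2 / ∑ τ, N τ * piv τ q.2 else 0

/-- The matrix `A = (L* + D)⁻¹ B`. -/
noncomputable def Amat {n m : ℕ} (Q : Fin m → Matrix (Fin n) (Fin n) ℝ)
    (piv : Fin m → Fin n → ℝ) (β δ : Fin m → Fin n → ℝ) :
    Matrix (Fin m × Fin n) (Fin m × Fin n) ℝ :=
  (Lstar Q piv + pairDiag δ)⁻¹ * pairDiag β

/-- The fixed-point map `H(p) = (I + A(diag(p) + (I − diag(p)) M))⁻¹ A p`. -/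
noncomputable def Hmap {n m : ℕ} (A Mlap : Matrix (Fin m × Fin n) (Fin m × Fin n) ℝ)
    (p : Fin m × Fin n → ℝ) : Fin m × Fin n → ℝ :=
  ((1 + A * (Matrix.diagonal p + (1 - Matrix.diagonal p) * Mlap))⁻¹).mulVec (A.mulVec p)

/-! A fixed point `p ≠ 0` of `H` solves `(L* + D) p = B (I - diag p) F* p`: both inverses in
`H` are genuine, since Lean's junk inverse `0` would force `H p = 0`. Now `L* + D` has
nonpositive off-diagonal entries and `F*` is nonnegative with positive diagonal. For two
solutions `p, q` in `(0,1)` let `s = min_k p_k / q_k`, attained at `k`, and suppose `s < 1`.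
Since `p ≥ s q` with equality at `k`, the sign pattern of `L* + D` gives
`((L* + D) p)_k ≤ s ((L* + D) q)_k`, while
`β_k (1 - p_k) (F* p)_k ≥ s β_k (1 - p_k) (F* q)_k > s β_k (1 - q_k) (F* q)_k` because
`p_k < q_k`; this contradicts the two equations. Hence `q ≤ p`, and by symmetry `p = q`. -/

namespace Matrix

variable {K R : Type*} [Fintype K]

lemma mulVec_apply_le_of_offDiag_nonpos [CommRing R] [PartialOrder R] [IsOrderedRing R]
    {L : Matrix K K R} (hL : ∀ k l, k ≠ l → L k l ≤ 0) {u v : K → R} (huv : u ≤ v) {k : K}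
    (hk : u k = v k) : (L *ᵥ v) k ≤ (L *ᵥ u) k := by
  have hdiff : (L *ᵥ v) k - (L *ᵥ u) k = ∑ l, L k l * (v l - u l) := by
    simp only [mulVec, dotProduct, ← Finset.sum_sub_distrib, mul_sub]
  have hsum : ∑ l, L k l * (v l - u l) ≤ 0 := Finset.sum_nonpos fun l _ => by
    rcases eq_or_ne k l with rfl | hkl
    · simp [hk]
    · exact mul_nonpos_of_nonpos_of_nonneg (hL k l hkl) (sub_nonneg.2 (huv l))
  exact sub_nonpos.1 (hdiff ▸ hsum)

lemma mulVec_eq_of_nonsing_inv_mulVec_eq [DecidableEq K] [CommRing R] {T : Matrix K K R}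
    {v w : K → R} (h : T⁻¹ *ᵥ w = v) (hv : v ≠ 0) : T *ᵥ v = w := by
  by_cases hT : IsUnit T.det
  · rw [← h, mulVec_mulVec, mul_nonsing_inv _ hT, one_mulVec]
  · rw [nonsing_inv_apply_not_isUnit _ hT, zero_mulVec] at h
    exact absurd h.symm hv

end Matrix

section Equilibrium

variable {K R : Type*} [Fintype K] [Field R] [LinearOrder R] [IsStrictOrderedRing R]

def IsSISEquilibrium (L F : Matrix K K R) (β p : K → R) : Prop :=
  ∀ k, (L *ᵥ p) k = β k * (1 - p k) * (F *ᵥ p) k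

variable {L F : Matrix K K R} {β p q : K → R}

lemma IsSISEquilibrium.le (hL : ∀ k l, k ≠ l → L k l ≤ 0) (hF : ∀ k l, 0 ≤ F k l)
    (hFdiag : ∀ k, 0 < F k k) (hβ : ∀ k, 0 < β k) (hp : IsSISEquilibrium L F β p)
    (hq : IsSISEquilibrium L F β q) (hp0 : ∀ k, 0 < p k) (hq0 : ∀ k, 0 < q k)
    (hq1 : ∀ k, q k < 1) : q ≤ p := by
  intro k
  obtain ⟨k₀, -, hk₀⟩ := Finset.exists_min_image Finset.univ (fun l => p l / q l)
    ⟨k, Finset.mem_univ k⟩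
  set s := p k₀ / q k₀
  have hs : 0 < s := div_pos (hp0 k₀) (hq0 k₀)
  have hsq : s • q ≤ p := fun l => (le_div_iff₀ (hq0 l)).1 (hk₀ l (Finset.mem_univ l))
  have hsk₀ : (s • q) k₀ = p k₀ := div_mul_cancel₀ _ (hq0 k₀).ne'
  suffices 1 ≤ s from (le_mul_of_one_le_left (hq0 k).le this).trans (hsq k)
  by_contra! hs1
  have hpq : p k₀ < q k₀ := hsk₀ ▸ mul_lt_of_lt_one_left (hq0 k₀) hs1
  have hFq : 0 < (F *ᵥ q) k₀ :=
    Finset.sum_pos' (fun l _ => mul_nonneg (hF k₀ l) (hq0 l).le)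
      ⟨k₀, Finset.mem_univ _, mul_pos (hFdiag k₀) (hq0 k₀)⟩
  have hFpq : s * (F *ᵥ q) k₀ ≤ (F *ᵥ p) k₀ := by
    rw [← smul_eq_mul, ← Pi.smul_apply, ← mulVec_smul]
    exact dotProduct_le_dotProduct_of_nonneg_left hsq (hF k₀)
  have hLpq : (L *ᵥ p) k₀ ≤ s * (L *ᵥ q) k₀ := by
    simpa [mulVec_smul] using mulVec_apply_le_of_offDiag_nonpos hL hsq hsk₀
  rw [hp k₀, hq k₀] at hLpq
  refine absurd hLpq (not_le.2 ?_)
  calc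
    s * (β k₀ * (1 - q k₀) * (F *ᵥ q) k₀) < β k₀ * (1 - p k₀) * (s * (F *ᵥ q) k₀) := by
        nlinarith [mul_pos (mul_pos hs (hβ k₀)) hFq]
    _ ≤ β k₀ * (1 - p k₀) * (F *ᵥ p) k₀ := by
        gcongr
        nlinarith [hβ k₀, hq1 k₀]

lemma IsSISEquilibrium.eq (hL : ∀ k l, k ≠ l → L k l ≤ 0) (hF : ∀ k l, 0 ≤ F k l)
    (hFdiag : ∀ k, 0 < F k k) (hβ : ∀ k, 0 < β k) (hp : IsSISEquilibrium L F β p)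
    (hq : IsSISEquilibrium L F β q) (hp0 : ∀ k, 0 < p k) (hp1 : ∀ k, p k < 1)
    (hq0 : ∀ k, 0 < q k) (hq1 : ∀ k, q k < 1) : p = q :=
  le_antisymm (hq.le hL hF hFdiag hβ hp hq0 hp0 hp1) (hp.le hL hF hFdiag hβ hq hp0 hq0 hq1)

end Equilibrium

section Metapopulation

variable {n m : ℕ}

lemma isSISEquilibrium_of_Hmap_eq_self {L F : Matrix (Fin m × Fin n) (Fin m × Fin n) ℝ}
    {β p : Fin m × Fin n → ℝ} (hfix : Hmap (L⁻¹ * diagonal β) (1 - F) p = p) (hp : p ≠ 0) :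
    IsSISEquilibrium L F β p := by
  have hS : diagonal p + (1 - diagonal p) * (1 - F) = 1 - diagonal (1 - p) * F := by
    have hD : diagonal (1 - p) = 1 - diagonal p := by
      rw [← diagonal_one]; exact (diagonal_sub _ _).symm
    rw [hD]; noncomm_ring
  have hcleared := mulVec_eq_of_nonsing_inv_mulVec_eq hfix hp
  rw [hS, mul_sub, mul_one, add_mulVec, sub_mulVec, one_mulVec] at hcleared
  have hfix' : (L⁻¹ * diagonal β) *ᵥ ((diagonal (1 - p) * F) *ᵥ p) = p := by
    rw [mulVec_mulVec]
    linear_combination -hcleared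
  rw [← mulVec_mulVec] at hfix'
  intro k
  rw [mulVec_eq_of_nonsing_inv_mulVec_eq hfix' hp, mulVec_diagonal, ← mulVec_mulVec,
    mulVec_diagonal, mul_assoc]
  rfl

lemma Lstar_add_pairDiag_apply_nonpos {Q : Fin m → Matrix (Fin n) (Fin n) ℝ}
    (hQoff : ∀ (α : Fin m) (i j : Fin n), i ≠ j → 0 ≤ Q α i j) {piv : Fin m → Fin n → ℝ}
    (hpivpos : ∀ α i, 0 < piv α i) (δ : Fin m → Fin n → ℝ) {k l : Fin m × Fin n}
    (hkl : k ≠ l) : (Lstar Q piv + pairDiag δ) k l ≤ 0 := by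
  have hδkl : pairDiag δ k l = 0 := diagonal_apply_ne _ hkl
  by_cases h₁ : k.1 = l.1
  · have h₂ : k.2 ≠ l.2 := fun h₂ => hkl (Prod.ext h₁ h₂)
    simp only [Matrix.add_apply, hδkl, add_zero, Lstar, of_apply, if_pos h₁, if_neg h₂,
      neg_nonpos]
    exact div_nonneg (mul_nonneg (hQoff _ _ _ (Ne.symm h₂)) (hpivpos _ _).le) (hpivpos _ _).le
  · simp [Lstar, hδkl, h₁]

lemma Fstar_nonneg {N : Fin m → ℝ} (hN : ∀ α, 0 < N α) {piv : Fin m → Fin n → ℝ}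
    (hpivpos : ∀ α i, 0 < piv α i) (k l : Fin m × Fin n) : 0 ≤ Fstar N piv k l := by
  simp only [Fstar, of_apply]
  split_ifs
  · exact div_nonneg (mul_pos (hN _) (hpivpos _ _)).le
      (Finset.sum_nonneg fun τ _ => (mul_pos (hN τ) (hpivpos τ _)).le)
  · exact le_rfl

lemma Fstar_apply_self_pos {N : Fin m → ℝ} (hN : ∀ α, 0 < N α)
    {piv : Fin m → Fin n → ℝ} (hpivpos : ∀ α i, 0 < piv α i) (k : Fin m × Fin n) :
    0 < Fstar N piv k k := by
  simp only [Fstar, of_apply]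
  exact div_pos (mul_pos (hN _) (hpivpos _ _))
    (Finset.sum_pos (fun τ _ => mul_pos (hN τ) (hpivpos τ _)) ⟨k.1, Finset.mem_univ _⟩)

end Metapopulation

theorem Hmap_fixed_point_unique_general
    {n m : ℕ}
    (Q : Fin m → Matrix (Fin n) (Fin n) ℝ)
    (hQoff : ∀ (α : Fin m) (i j : Fin n), i ≠ j → 0 ≤ Q α i j)
    (piv : Fin m → Fin n → ℝ) (hpivpos : ∀ α i, 0 < piv α i)
    (N : Fin m → ℝ) (hN : ∀ α, 0 < N α)
    (β δ : Fin m → Fin n → ℝ)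
    (hβ : ∀ α i, 0 < β α i)
    (pstar qstar : Fin m × Fin n → ℝ)
    (hpstar0 : ∀ q, 0 < pstar q) (hpstar1 : ∀ q, pstar q < 1)
    (hqstar0 : ∀ q, 0 < qstar q) (hqstar1 : ∀ q, qstar q < 1)
    (hpfix : Hmap (Amat Q piv β δ) (1 - Fstar N piv) pstar = pstar)
    (hqfix : Hmap (Amat Q piv β δ) (1 - Fstar N piv) qstar = qstar) :
    pstar = qstar := by
  funext k
  have hp := isSISEquilibrium_of_Hmap_eq_self hpfix (Function.ne_iff.2 ⟨k, (hpstar0 k).ne'⟩)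
  have hq := isSISEquilibrium_of_Hmap_eq_self hqfix (Function.ne_iff.2 ⟨k, (hqstar0 k).ne'⟩)
  exact congrFun (hp.eq (fun _ _ => Lstar_add_pairDiag_apply_nonpos hQoff hpivpos δ)
    (Fstar_nonneg hN hpivpos) (Fstar_apply_self_pos hN hpivpos) (fun l => hβ l.1 l.2) hq
    hpstar0 hpstar1 hqstar0 hqstar1) k

/-- If `p*` and `q*` are two fixed points of `H` strictly between `0`
and `1` entrywise, then `p* = q*`: the map `H` has at most one strictly positive fixed
point, where `A = (L* + D)⁻¹ B` and `M = I − F*`. -/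
theorem Hmap_fixed_point_unique
    {n m : ℕ} (hn : 2 ≤ n) (hm : 1 ≤ m)
    (Q : Fin m → Matrix (Fin n) (Fin n) ℝ)
    (hQoff : ∀ (α : Fin m) (i j : Fin n), i ≠ j → 0 ≤ Q α i j)
    (hQdiag : ∀ (α : Fin m) (i : Fin n), Q α i i = -∑ j ∈ Finset.univ \ {i}, Q α i j)
    (hQirr : ∀ (α : Fin m) (i j : Fin n),
      Relation.ReflTransGen (fun a b => 0 < Q α a b) i j)
    (piv : Fin m → Fin n → ℝ) (hpivpos : ∀ α i, 0 < piv α i)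
    (hpiveig : ∀ (α : Fin m) (i : Fin n), ∑ j, Q α j i * piv α j = 0)
    (hpivsum : ∀ α, ∑ i, piv α i = 1)
    (N : Fin m → ℝ) (hN : ∀ α, 0 < N α)
    (β δ : Fin m → Fin n → ℝ)
    (hβ : ∀ α i, 0 < β α i) (hδ : ∀ α i, 0 ≤ δ α i)
    (hδpos : ∀ α, ∃ k, 0 < δ α k)
    (pstar qstar : Fin m × Fin n → ℝ)
    (hpstar0 : ∀ q, 0 < pstar q) (hpstar1 : ∀ q, pstar q < 1)
    (hqstar0 : ∀ q, 0 < qstar q) (hqstar1 : ∀ q, qstar q < 1)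
    (hpfix : Hmap (Amat Q piv β δ) (1 - Fstar N piv) pstar = pstar)
    (hqfix : Hmap (Amat Q piv β δ) (1 - Fstar N piv) qstar = qstar) :
    pstar = qstar :=
  Hmap_fixed_point_unique_general Q hQoff piv hpivpos N hN β δ hβ pstar qstar hpstar0 hpstar1
    hqstar0 hqstar1 hpfix hqfix
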